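/- arXiv:1406.7339 — 4 statements merged into one kernel-verified Lean document; each statement's English description precedes it below -/
import Mathlib

section
/- Let x_0 ∈ ℝ^d be an arbitrary initial iterate and let (x_j) be the random iterates produced by Algorithm 1. Then for every iteration j = 1, 2, 3, …, the expected squared distance to the feasible set satisfies E[d(x_j, S)²] ≤ (1 − 1/(L²(n_i + βm)))^j · d(x_0, S)². -/
open scoped RealInnerProductSpace BigOperators

noncomputable section

/-- An `(m, β)` row paving of the rows of `a` indexed by `I`: a partition of `I` into `m`
nonempty blocks `T 0, …, T (m-1)` such that for each block `τ`, the row submatrix `A_τ` with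
rows `(a i)_{i ∈ τ}` satisfies `λ_max(A_τ A_τ*) ≤ β`, stated equivalently as the quadratic
bound `‖A_τ x‖² = ∑_{i ∈ τ} ⟪a i, x⟫² ≤ β ‖x‖²` for all `x`. -/
def IsRowPaving {n d : ℕ} (a : Fin n → EuclideanSpace ℝ (Fin d)) (I : Finset (Fin n))
    (m : ℕ) (β : ℝ) (T : Fin m → Finset (Fin n)) : Prop :=
  (∀ k, (T k).Nonempty) ∧
  (∀ k l, k ≠ l → Disjoint (T k) (T l)) ∧
  (Finset.univ.biUnion T = I) ∧
  (∀ k, ∀ x : EuclideanSpace ℝ (Fin d), ∑ i ∈ T k, ⟪a i, x⟫ ^ 2 ≤ β * ‖x‖ ^ 2)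

/-- The random iterates of a Kaczmarz-type algorithm: given the outcomes `ω : Fin j → C` of
`j` independent random choices and an update map `step`, `kacIter step x0 j ω` is the `j`-th
iterate started from `x0`. -/
def kacIter {C V : Type*} (step : C → V → V) (x0 : V) : (j : ℕ) → (Fin j → C) → V
  | 0, _ => x0
  | j + 1, ω => step (ω (Fin.last j)) (kacIter step x0 j fun k => ω k.castSucc)

/-! Let `z` be the point of `S` nearest to `x` and `N = n_i + βm`. A block step projects onto a
convex set containing `z`, so it brings `x` closer to `z` in squared norm by at least
`‖A_τ x - b_τ‖² / β`, the paving bound converting the residual into displacement; an inequality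
step does so by `max(⟪a_i, x⟫ - b_i, 0)²`. With weights `p / m = β / N` and
`(1 - p) / n_i = 1 / N` the expected gain is `‖e(Ax - b)‖² / N ≥ d(x, S)² / (L² N)` by the
Hoffman bound: one step contracts `𝔼 d(·, S)²` by `1 - 1/(L² N)`, and independence of the choices
iterates this. -/

open Finset Metric

section Geometry

variable {V : Type*} [NormedAddCommGroup V] [InnerProductSpace ℝ V]

theorem Convex.norm_sub_sq_add_norm_sub_sq_le {K : Set V} (hK : Convex ℝ K) {x p z : V}
    (hp : p ∈ K) (hmin : ∀ y ∈ K, ‖x - p‖ ≤ ‖x - y‖) (hz : z ∈ K) :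
    ‖x - p‖ ^ 2 + ‖p - z‖ ^ 2 ≤ ‖x - z‖ ^ 2 := by
  have : Nonempty K := ⟨⟨p, hp⟩⟩
  have hinf : ‖x - p‖ = ⨅ y : K, ‖x - y‖ :=
    le_antisymm (le_ciInf fun y => hmin y y.2)
      (ciInf_le (f := fun y : K => ‖x - y‖) ⟨0, Set.forall_mem_range.2 fun _ => norm_nonneg _⟩
        ⟨p, hp⟩)
  have hobtuse := (norm_eq_iInf_iff_real_inner_le_zero hK hp).1 hinf z hz
  have hsplit : ‖x - z‖ ^ 2 = ‖x - p‖ ^ 2 - 2 * ⟪x - p, z - p⟫ + ‖p - z‖ ^ 2 := by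
    rw [show x - z = (x - p) - (z - p) by abel, norm_sub_sq_real, norm_sub_rev z p]
  linarith

theorem convex_setOf_forall_inner_eq {ι : Type*} (s : Finset ι) (a : ι → V) (b : ι → ℝ) :
    Convex ℝ {y : V | ∀ i ∈ s, ⟪a i, y⟫ = b i} := by
  simp only [Set.ofPred_forall]
  exact convex_iInter₂ fun i _ => convex_hyperplane (innerₛₗ ℝ (a i)).isLinear (b i)

theorem isClosed_setOf_inner_eq_and_inner_le {ι : Type*} (a : ι → V) (b : ι → ℝ)
    (E I : ι → Prop) :
    IsClosed {x : V | (∀ i, E i → ⟪a i, x⟫ = b i) ∧ (∀ i, I i → ⟪a i, x⟫ ≤ b i)} := by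
  simp only [Set.ofPred_and, Set.ofPred_forall]
  exact (isClosed_iInter fun i => isClosed_iInter fun _ =>
      isClosed_eq (by fun_prop) continuous_const).inter
    (isClosed_iInter fun i => isClosed_iInter fun _ => isClosed_le (by fun_prop) continuous_const)

theorem norm_sub_sq_le_of_block_projection {ι : Type*} {s : Finset ι} {a : ι → V} {b : ι → ℝ}
    {β : ℝ} (hβ : 0 < β) (hs : ∀ v : V, ∑ i ∈ s, ⟪a i, v⟫ ^ 2 ≤ β * ‖v‖ ^ 2) {x p z : V}
    (hp : ∀ i ∈ s, ⟪a i, p⟫ = b i)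
    (hmin : ∀ y : V, (∀ i ∈ s, ⟪a i, y⟫ = b i) → ‖x - p‖ ≤ ‖x - y‖)
    (hz : ∀ i ∈ s, ⟪a i, z⟫ = b i) :
    ‖p - z‖ ^ 2 ≤ ‖x - z‖ ^ 2 - (∑ i ∈ s, (⟪a i, x⟫ - b i) ^ 2) / β := by
  have hpyth := (convex_setOf_forall_inner_eq s a b).norm_sub_sq_add_norm_sub_sq_le hp hmin hz
  have hres : ∑ i ∈ s, (⟪a i, x⟫ - b i) ^ 2 ≤ β * ‖x - p‖ ^ 2 :=
    calc ∑ i ∈ s, (⟪a i, x⟫ - b i) ^ 2 = ∑ i ∈ s, ⟪a i, x - p⟫ ^ 2 :=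
          sum_congr rfl fun i hi => by rw [inner_sub_right, hp i hi]
      _ ≤ β * ‖x - p‖ ^ 2 := hs (x - p)
  have : (∑ i ∈ s, (⟪a i, x⟫ - b i) ^ 2) / β ≤ ‖x - p‖ ^ 2 := (div_le_iff₀' hβ).2 hres
  linarith

theorem norm_halfspace_step_sub_sq_le {u x z : V} {c : ℝ} (hu : ‖u‖ = 1) (hz : ⟪u, z⟫ ≤ c) :
    ‖x - max (⟪u, x⟫ - c) 0 • u - z‖ ^ 2 ≤ ‖x - z‖ ^ 2 - max (⟪u, x⟫ - c) 0 ^ 2 := by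
  set h := max (⟪u, x⟫ - c) 0
  have hgain : h ^ 2 ≤ h * ⟪u, x - z⟫ := by
    rw [inner_sub_right]
    rcases le_total (⟪u, x⟫ - c) 0 with hr | hr
    · simp [h, max_eq_right hr]
    · rw [show h = ⟪u, x⟫ - c from max_eq_left hr]
      nlinarith
  rw [show x - h • u - z = (x - z) - h • u by abel, norm_sub_sq_real, real_inner_smul_right,
    norm_smul, hu, Real.norm_eq_abs, mul_one, sq_abs, real_inner_comm]
  linarith

end Geometry

section Iteration

variable {C V : Type*}

theorem kacIter_snoc (step : C → V → V) (x0 : V) {j : ℕ} (ω : Fin j → C) (c : C) :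
    kacIter step x0 (j + 1) (Fin.snoc ω c) = step c (kacIter step x0 j ω) := by
  simp [kacIter]

theorem sum_prod_mul_kacIter_succ [Fintype C] (step : C → V → V) (w : C → ℝ) (f : V → ℝ)
    (x0 : V) (j : ℕ) :
    ∑ ω : Fin (j + 1) → C, (∏ k, w (ω k)) * f (kacIter step x0 (j + 1) ω) =
      ∑ ω : Fin j → C, (∏ k, w (ω k)) * ∑ c, w c * f (step c (kacIter step x0 j ω)) := by
  rw [← (Fin.snocEquiv fun _ => C).sum_comp, Fintype.sum_prod_type, sum_comm]
  refine sum_congr rfl fun ω _ => ?_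
  rw [mul_sum]
  refine sum_congr rfl fun c _ => ?_
  rw [show (Fin.snocEquiv fun _ => C) (c, ω) = Fin.snoc ω c from rfl, kacIter_snoc]
  simp only [Fin.prod_univ_castSucc, Fin.snoc_castSucc, Fin.snoc_last]
  ring

theorem sum_prod_mul_kacIter_le [Fintype C] {step : C → V → V} {w : C → ℝ} (hw : ∀ c, 0 ≤ w c)
    {f : V → ℝ} {q : ℝ} (hq : 0 ≤ q) (hstep : ∀ x, ∑ c, w c * f (step c x) ≤ q * f x)
    (x0 : V) (j : ℕ) :
    ∑ ω : Fin j → C, (∏ k, w (ω k)) * f (kacIter step x0 j ω) ≤ q ^ j * f x0 := by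
  induction j with
  | zero => simp [kacIter]
  | succ j ih =>
    rw [sum_prod_mul_kacIter_succ]
    calc _ ≤ ∑ ω : Fin j → C, (∏ k, w (ω k)) * (q * f (kacIter step x0 j ω)) :=
          sum_le_sum fun ω _ =>
            mul_le_mul_of_nonneg_left (hstep _) (prod_nonneg fun k _ => hw (ω k))
      _ = q * ∑ ω : Fin j → C, (∏ k, w (ω k)) * f (kacIter step x0 j ω) := by
          rw [mul_sum]
          exact sum_congr rfl fun ω _ => by ring
      _ ≤ q * (q ^ j * f x0) := mul_le_mul_of_nonneg_left ih hq
      _ = q ^ (j + 1) * f x0 := by ring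

end Iteration

theorem sum_weight_mul_infDist_sq_le_of_hoffman {C V : Type*} [Fintype C] [NormedAddCommGroup V]
    [ProperSpace V] {S : Set V} (hS : IsClosed S) (hSne : S.Nonempty) {step : C → V → V}
    {w : C → ℝ} (hw : ∀ c, 0 ≤ w c) {g : V → ℝ} (hg : ∀ x, 0 ≤ g x) {L N : ℝ} (hL : 0 < L)
    (hN : 0 < N) (hHoffman : ∀ x, infDist x S ≤ L * √(g x))
    (hdecrease : ∀ x, ∀ z ∈ S, ∑ c, w c * ‖step c x - z‖ ^ 2 ≤ ‖x - z‖ ^ 2 - g x / N) (x : V) :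
    ∑ c, w c * infDist (step c x) S ^ 2 ≤ (1 - 1 / (L ^ 2 * N)) * infDist x S ^ 2 := by
  obtain ⟨z, hzS, hxz⟩ := hS.exists_infDist_eq_dist hSne x
  have hHoff : infDist x S ^ 2 ≤ L ^ 2 * g x :=
    calc infDist x S ^ 2 ≤ (L * √(g x)) ^ 2 := pow_le_pow_left₀ infDist_nonneg (hHoffman x) 2
      _ = L ^ 2 * g x := by rw [mul_pow, Real.sq_sqrt (hg x)]
  have hgain : infDist x S ^ 2 / (L ^ 2 * N) ≤ g x / N := by
    rw [← div_div, div_le_div_iff_of_pos_right hN, div_le_iff₀' (by positivity)]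
    exact hHoff
  calc ∑ c, w c * infDist (step c x) S ^ 2 ≤ ∑ c, w c * ‖step c x - z‖ ^ 2 :=
        sum_le_sum fun c _ => mul_le_mul_of_nonneg_left (pow_le_pow_left₀ infDist_nonneg
          ((infDist_le_dist_of_mem hzS).trans_eq (dist_eq_norm _ _)) 2) (hw c)
    _ ≤ infDist x S ^ 2 - g x / N := by
        rw [hxz, dist_eq_norm]
        exact hdecrease x z hzS
    _ ≤ (1 - 1 / (L ^ 2 * N)) * infDist x S ^ 2 := by
        rw [sub_mul, one_mul, one_div_mul_eq_div]
        linarith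

theorem Fin.card_subtype_le_val (ne ni : ℕ) :
    Fintype.card {i : Fin (ne + ni) // ne ≤ (i : ℕ)} = ni := by
  have h := card_filter_add_card_filter_not (s := (univ : Finset (Fin (ne + ni))))
    fun i => (i : ℕ) < ne
  simp only [Fin.card_filter_val_lt, not_lt, card_univ, Fintype.card_fin] at h
  rw [Fintype.card_subtype]
  omega

namespace IsRowPaving

variable {n d m : ℕ} {a : Fin n → EuclideanSpace ℝ (Fin d)} {I : Finset (Fin n)} {β : ℝ}
  {T : Fin m → Finset (Fin n)}

theorem mem_of_mem (hT : IsRowPaving a I m β T) {k : Fin m} {i : Fin n} (hi : i ∈ T k) :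
    i ∈ I :=
  hT.2.2.1 ▸ mem_biUnion.2 ⟨k, mem_univ k, hi⟩

theorem sum_sum_eq {M : Type*} [AddCommMonoid M] (hT : IsRowPaving a I m β T) (g : Fin n → M) :
    ∑ k, ∑ i ∈ T k, g i = ∑ i ∈ I, g i := by
  rw [← hT.2.2.1, sum_biUnion fun k _ l _ hkl => hT.2.1 k l hkl]

end IsRowPaving

section System

variable {V : Type*} [NormedAddCommGroup V] [InnerProductSpace ℝ V] {ne ni : ℕ}

/-- `‖e(Ax - b)‖²`: the rows `i < ne` are the equalities, the others the inequalities. -/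
def sqViolation (a : Fin (ne + ni) → V) (b : Fin (ne + ni) → ℝ) (x : V) : ℝ :=
  ∑ i : Fin (ne + ni), (if (i : ℕ) < ne then ⟪a i, x⟫ - b i else max (⟪a i, x⟫ - b i) 0) ^ 2

theorem sqViolation_nonneg (a : Fin (ne + ni) → V) (b : Fin (ne + ni) → ℝ) (x : V) :
    0 ≤ sqViolation a b x :=
  sum_nonneg fun _ _ => sq_nonneg _

theorem sqViolation_eq (a : Fin (ne + ni) → V) (b : Fin (ne + ni) → ℝ) (x : V) :
    sqViolation a b x =
      ∑ i ∈ univ.filter (fun i : Fin (ne + ni) => (i : ℕ) < ne), (⟪a i, x⟫ - b i) ^ 2 +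
        ∑ i : {i : Fin (ne + ni) // ne ≤ (i : ℕ)}, max (⟪a i.1, x⟫ - b i.1) 0 ^ 2 := by
  rw [sqViolation, ← sum_subtype (univ.filter fun i : Fin (ne + ni) => ne ≤ (i : ℕ)) (by simp)
    fun i => max (⟪a i, x⟫ - b i) 0 ^ 2]
  simp only [apply_ite (· ^ 2), sum_ite, not_lt]

end System

theorem sum_weight_mul_norm_step_sub_sq_le {ne ni d m : ℕ}
    {a : Fin (ne + ni) → EuclideanSpace ℝ (Fin d)} {b : Fin (ne + ni) → ℝ} (ha : ∀ i, ‖a i‖ = 1)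
    {β : ℝ} (hβ : 0 < β) {T : Fin m → Finset (Fin (ne + ni))}
    (hT : IsRowPaving a (univ.filter fun i : Fin (ne + ni) => (i : ℕ) < ne) m β T)
    {step : (Fin m ⊕ {i : Fin (ne + ni) // ne ≤ (i : ℕ)}) →
      EuclideanSpace ℝ (Fin d) → EuclideanSpace ℝ (Fin d)}
    (hstepBlock : ∀ (k : Fin m) (x : EuclideanSpace ℝ (Fin d)),
      (∀ i ∈ T k, ⟪a i, step (Sum.inl k) x⟫ = b i) ∧
      (∀ y : EuclideanSpace ℝ (Fin d), (∀ i ∈ T k, ⟪a i, y⟫ = b i) →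
        ‖x - step (Sum.inl k) x‖ ≤ ‖x - y‖))
    (hstepRow : ∀ (i : {i : Fin (ne + ni) // ne ≤ (i : ℕ)}) (x : EuclideanSpace ℝ (Fin d)),
      step (Sum.inr i) x = x - max (⟪a i.1, x⟫ - b i.1) 0 • a i.1)
    {w : (Fin m ⊕ {i : Fin (ne + ni) // ne ≤ (i : ℕ)}) → ℝ} (hN : 0 < ni + β * m)
    (hwBlock : ∀ k : Fin m, w (Sum.inl k) = β / (ni + β * m))
    (hwRow : ∀ i : {i : Fin (ne + ni) // ne ≤ (i : ℕ)}, w (Sum.inr i) = 1 / (ni + β * m))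
    (x : EuclideanSpace ℝ (Fin d)) {z : EuclideanSpace ℝ (Fin d)}
    (hzeq : ∀ i : Fin (ne + ni), (i : ℕ) < ne → ⟪a i, z⟫ = b i)
    (hzle : ∀ i : Fin (ne + ni), ne ≤ (i : ℕ) → ⟪a i, z⟫ ≤ b i) :
    ∑ c, w c * ‖step c x - z‖ ^ 2 ≤ ‖x - z‖ ^ 2 - sqViolation a b x / (ni + β * m) := by
  set N : ℝ := ni + β * m
  set D := ‖x - z‖ ^ 2
  have hblock (k : Fin m) :
      ‖step (.inl k) x - z‖ ^ 2 ≤ D - (∑ i ∈ T k, (⟪a i, x⟫ - b i) ^ 2) / β :=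
    norm_sub_sq_le_of_block_projection hβ (hT.2.2.2 k) (hstepBlock k x).1 (hstepBlock k x).2
      fun i hi => hzeq i (mem_filter.1 (hT.mem_of_mem hi)).2
  have hrow (i : {i : Fin (ne + ni) // ne ≤ (i : ℕ)}) :
      ‖step (.inr i) x - z‖ ^ 2 ≤ D - max (⟪a i.1, x⟫ - b i.1) 0 ^ 2 := by
    rw [hstepRow]
    exact norm_halfspace_step_sub_sq_le (ha i) (hzle i i.2)
  calc ∑ c, w c * ‖step c x - z‖ ^ 2
      = ∑ k, β / N * ‖step (.inl k) x - z‖ ^ 2 +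
          ∑ i : {i : Fin (ne + ni) // ne ≤ (i : ℕ)}, 1 / N * ‖step (.inr i) x - z‖ ^ 2 := by
        simp only [Fintype.sum_sum_type, hwBlock, hwRow]
    _ ≤ ∑ k, β / N * (D - (∑ i ∈ T k, (⟪a i, x⟫ - b i) ^ 2) / β) +
          ∑ i : {i : Fin (ne + ni) // ne ≤ (i : ℕ)},
            1 / N * (D - max (⟪a i.1, x⟫ - b i.1) 0 ^ 2) := by
        gcongr with k _ i _
        exacts [hblock k, hrow i]
    _ = (β * m + ni) / N * D - (∑ k, ∑ i ∈ T k, (⟪a i, x⟫ - b i) ^ 2 +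
          ∑ i : {i : Fin (ne + ni) // ne ≤ (i : ℕ)}, max (⟪a i.1, x⟫ - b i.1) 0 ^ 2) / N := by
        simp only [← mul_sum, sum_sub_distrib, ← sum_div, sum_const, card_univ, Fintype.card_fin,
          Fin.card_subtype_le_val, nsmul_eq_mul]
        field_simp
        ring
    _ = D - sqViolation a b x / N := by
        rw [sqViolation_eq, ← hT.sum_sum_eq, add_comm (β * m), div_self hN.ne', one_mul]

theorem block_kaczmarz_with_inequalities_convergence_general
    {ne ni d m : ℕ} (hni : 0 < ni) (hm : 0 < m)
    (a : Fin (ne + ni) → EuclideanSpace ℝ (Fin d)) (b : Fin (ne + ni) → ℝ)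
    -- the matrix is standardized
    (ha : ∀ i, ‖a i‖ = 1)
    -- the feasible set
    (S : Set (EuclideanSpace ℝ (Fin d)))
    (hSdef : S = {x | (∀ i : Fin (ne + ni), (i : ℕ) < ne → ⟪a i, x⟫ = b i) ∧
                      (∀ i : Fin (ne + ni), ne ≤ (i : ℕ) → ⟪a i, x⟫ ≤ b i)})
    (hSne : S.Nonempty)
    -- an (m, β) row paving of the equality submatrix A_=
    (β : ℝ) (hβ : 0 < β)
    (T : Fin m → Finset (Fin (ne + ni)))
    (hT : IsRowPaving a (Finset.univ.filter fun i : Fin (ne + ni) => (i : ℕ) < ne) m β T)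
    -- a Hoffman constant for the system: d(x, S) ≤ L ‖e(Ax − b)‖₂
    (L : ℝ) (hL : 0 < L)
    (hHoffman : ∀ x : EuclideanSpace ℝ (Fin d), Metric.infDist x S ≤
      L * Real.sqrt (∑ i : Fin (ne + ni), (if (i : ℕ) < ne then ⟪a i, x⟫ - b i
                           else max (⟪a i, x⟫ - b i) 0) ^ 2))
    -- the one-step update of Algorithm 1:
    (step : (Fin m ⊕ {i : Fin (ne + ni) // ne ≤ (i : ℕ)}) →
      EuclideanSpace ℝ (Fin d) → EuclideanSpace ℝ (Fin d))
    -- if a block τ = T k is chosen, the iterate is orthogonally projected onto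
    -- the affine subspace {y : A_τ y = b_τ} (the nearest feasible point for the block)
    (hstepBlock : ∀ (k : Fin m) (x : EuclideanSpace ℝ (Fin d)),
      (∀ i ∈ T k, ⟪a i, step (Sum.inl k) x⟫ = b i) ∧
      (∀ y : EuclideanSpace ℝ (Fin d), (∀ i ∈ T k, ⟪a i, y⟫ = b i) →
        ‖x - step (Sum.inl k) x‖ ≤ ‖x - y‖))
    -- if an inequality row i is chosen, the simple Kaczmarz update for inequalities is used
    (hstepRow : ∀ (i : {i : Fin (ne + ni) // ne ≤ (i : ℕ)}) (x : EuclideanSpace ℝ (Fin d)),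
      step (Sum.inr i) x = x - max (⟪a i.1, x⟫ - b i.1) 0 • a i.1)
    -- the probability mass of each single random choice
    (w : (Fin m ⊕ {i : Fin (ne + ni) // ne ≤ (i : ℕ)}) → ℝ)
    (hwBlock : ∀ k : Fin m, w (Sum.inl k) = (β * m / (ni + β * m)) / m)
    (hwRow : ∀ i : {i : Fin (ne + ni) // ne ≤ (i : ℕ)},
      w (Sum.inr i) = (1 - β * m / (ni + β * m)) / ni)
    -- arbitrary initial iterate, number of iterations
    (x0 : EuclideanSpace ℝ (Fin d)) (j : ℕ) :
    -- 𝔼[d(x_j, S)²] ≤ (1 − 1/(L²(n_i + βm)))^j ⬝ d(x_0, S)²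
    ∑ ω : Fin j → (Fin m ⊕ {i : Fin (ne + ni) // ne ≤ (i : ℕ)}),
        (∏ k, w (ω k)) * Metric.infDist (kacIter step x0 j ω) S ^ 2 ≤
      (1 - 1 / (L ^ 2 * (ni + β * m))) ^ j * Metric.infDist x0 S ^ 2 := by
  set N : ℝ := ni + β * m
  have hN : 0 < N := by positivity
  have hS : IsClosed S := hSdef ▸ isClosed_setOf_inner_eq_and_inner_le a b _ _
  have hwBlock' (k : Fin m) : w (.inl k) = β / N := by
    rw [hwBlock]
    field_simp
  have hwRow' (i : {i : Fin (ne + ni) // ne ≤ (i : ℕ)}) : w (.inr i) = 1 / N := by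
    rw [hwRow]
    field_simp
    ring
  have hw : ∀ c, 0 ≤ w c := by
    rintro (k | i) <;> simp only [hwBlock', hwRow'] <;> positivity
  have hcontract := sum_weight_mul_infDist_sq_le_of_hoffman hS hSne hw (sqViolation_nonneg a b)
    hL hN hHoffman fun x z hz =>
      sum_weight_mul_norm_step_sub_sq_le ha hβ hT hstepBlock hstepRow hN hwBlock' hwRow' x
        (hSdef ▸ hz).1 (hSdef ▸ hz).2
  -- the contraction at an infeasible point forces a nonnegative rate
  have hq : 0 ≤ 1 - 1 / (L ^ 2 * N) := by
    set i₀ : Fin (ne + ni) := ⟨ne, by omega⟩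
    have hyS : (b i₀ + 1) • a i₀ ∉ S := by
      rw [hSdef]
      intro hy
      have := hy.2 i₀ le_rfl
      rw [real_inner_smul_right, real_inner_self_eq_norm_sq, ha, one_pow, mul_one] at this
      linarith
    have hy := (hS.notMem_iff_infDist_pos hSne).1 hyS
    exact nonneg_of_mul_nonneg_left
      ((sum_nonneg fun c _ => mul_nonneg (hw c) (sq_nonneg _)).trans (hcontract _)) (pow_pos hy 2)
  exact sum_prod_mul_kacIter_le (f := fun x => infDist x S ^ 2) hw hq hcontract x0 j

/-- **Theorem (Convergence of Algorithm 1).**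
Consider a standardized system of `n_e` equalities `⟪a i, x⟫ = b i` (rows `i < n_e`) and
`n_i` inequalities `⟪a i, x⟫ ≤ b i` (rows `i ≥ n_e`), with nonempty feasible set `S`, an
`(m, β)` row paving `T` of the equality submatrix `A_=`, and a Hoffman constant `L` for the
system.  Algorithm 1 draws, at each iteration independently, with probability
`p = βm/(n_i + βm)` a uniformly random block `τ` of `T` and projects orthogonally onto
`{x : A_τ x = b_τ}`, and otherwise a uniformly random inequality row `i`, performing the
update `x ↦ x − max(⟪a i, x⟫ − b i, 0) • a i`.  Then for every `j ≥ 1`,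
`𝔼[d(x_j, S)²] ≤ (1 − 1/(L²(n_i + βm)))^j ⬝ d(x_0, S)²`, the expectation being over the `j`
independent choices (the choice at one step is `c : Fin m ⊕ {i // n_e ≤ i}`, with
probability mass `w c`). -/
theorem block_kaczmarz_with_inequalities_convergence
    {ne ni d m : ℕ} (hni : 0 < ni) (hm : 0 < m)
    (a : Fin (ne + ni) → EuclideanSpace ℝ (Fin d)) (b : Fin (ne + ni) → ℝ)
    -- the matrix is standardized
    (ha : ∀ i, ‖a i‖ = 1)
    -- the feasible set
    (S : Set (EuclideanSpace ℝ (Fin d)))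
    (hSdef : S = {x | (∀ i : Fin (ne + ni), (i : ℕ) < ne → ⟪a i, x⟫ = b i) ∧
                      (∀ i : Fin (ne + ni), ne ≤ (i : ℕ) → ⟪a i, x⟫ ≤ b i)})
    (hSne : S.Nonempty)
    -- an (m, β) row paving of the equality submatrix A_=
    (β : ℝ) (hβ : 0 < β)
    (T : Fin m → Finset (Fin (ne + ni)))
    (hT : IsRowPaving a (Finset.univ.filter fun i : Fin (ne + ni) => (i : ℕ) < ne) m β T)
    -- a Hoffman constant for the system: d(x, S) ≤ L ‖e(Ax − b)‖₂
    (L : ℝ) (hL : 0 < L)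
    (hHoffman : ∀ x : EuclideanSpace ℝ (Fin d), Metric.infDist x S ≤
      L * Real.sqrt (∑ i : Fin (ne + ni), (if (i : ℕ) < ne then ⟪a i, x⟫ - b i
                           else max (⟪a i, x⟫ - b i) 0) ^ 2))
    -- the one-step update of Algorithm 1:
    (step : (Fin m ⊕ {i : Fin (ne + ni) // ne ≤ (i : ℕ)}) →
      EuclideanSpace ℝ (Fin d) → EuclideanSpace ℝ (Fin d))
    -- if a block τ = T k is chosen, the iterate is orthogonally projected onto
    -- the affine subspace {y : A_τ y = b_τ} (the nearest feasible point for the block)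
    (hstepBlock : ∀ (k : Fin m) (x : EuclideanSpace ℝ (Fin d)),
      (∀ i ∈ T k, ⟪a i, step (Sum.inl k) x⟫ = b i) ∧
      (∀ y : EuclideanSpace ℝ (Fin d), (∀ i ∈ T k, ⟪a i, y⟫ = b i) →
        ‖x - step (Sum.inl k) x‖ ≤ ‖x - y‖))
    -- if an inequality row i is chosen, the simple Kaczmarz update for inequalities is used
    (hstepRow : ∀ (i : {i : Fin (ne + ni) // ne ≤ (i : ℕ)}) (x : EuclideanSpace ℝ (Fin d)),
      step (Sum.inr i) x = x - max (⟪a i.1, x⟫ - b i.1) 0 • a i.1)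
    -- the probability mass of each single random choice
    (w : (Fin m ⊕ {i : Fin (ne + ni) // ne ≤ (i : ℕ)}) → ℝ)
    (hwBlock : ∀ k : Fin m, w (Sum.inl k) = (β * m / (ni + β * m)) / m)
    (hwRow : ∀ i : {i : Fin (ne + ni) // ne ≤ (i : ℕ)},
      w (Sum.inr i) = (1 - β * m / (ni + β * m)) / ni)
    -- arbitrary initial iterate, number of iterations
    (x0 : EuclideanSpace ℝ (Fin d)) (j : ℕ) (hj : 1 ≤ j) :
    -- 𝔼[d(x_j, S)²] ≤ (1 − 1/(L²(n_i + βm)))^j ⬝ d(x_0, S)²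
    ∑ ω : Fin j → (Fin m ⊕ {i : Fin (ne + ni) // ne ≤ (i : ℕ)}),
        (∏ k, w (ω k)) * Metric.infDist (kacIter step x0 j ω) S ^ 2 ≤
      (1 - 1 / (L ^ 2 * (ni + β * m))) ^ j * Metric.infDist x0 S ^ 2 :=
  block_kaczmarz_with_inequalities_convergence_general hni hm a b ha S hSdef hSne β hβ T hT L hL
    hHoffman step hstepBlock hstepRow w hwBlock hwRow x0 j
end
end

section
/- Let a ∈ ℝ^d with ‖a‖ = 1, let c ∈ ℝ, and let S be a nonempty closed convex subset of ℝ^d contained in the half-space {y : ⟨a, y⟩ ≤ c}. For any x ∈ ℝ^d, set x' = x − max(⟨a, x⟩ − c, 0)·a. Then d(x', S)² ≤ d(x, S)² − (max(⟨a, x⟩ − c, 0))². -/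
/-!
Write `t = max (⟪a, x⟫ - c) 0`. For every `y` in the half-space, `t ⟪a, x - y⟫ ≥ t (⟪a, x⟫ - c) = t²`,
so expanding the square gives `‖x - t • a - y‖² + t² ≤ ‖x - y‖²`. Taking the infimum over `y ∈ S`
turns this pointwise inequality into the one for distances to `S`; no nearest point is needed.
-/

open scoped RealInnerProductSpace

open Metric

lemma max_zero_mul_self_eq_sq (u : ℝ) : max u 0 * u = max u 0 ^ 2 := by
  rcases le_total u 0 with hu | hu
  · simp [max_eq_right hu]
  · rw [max_eq_left hu, sq]

lemma dist_sub_smul_sq_add_sq_le {E : Type*} [NormedAddCommGroup E] [InnerProductSpace ℝ E]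
    {a : E} (ha : ‖a‖ = 1) {c : ℝ} {y : E} (hy : ⟪a, y⟫ ≤ c) (x : E) :
    dist (x - max (⟪a, x⟫ - c) 0 • a) y ^ 2 + max (⟪a, x⟫ - c) 0 ^ 2 ≤ dist x y ^ 2 := by
  set t := max (⟪a, x⟫ - c) 0
  have ht : 0 ≤ t := le_max_right _ _
  have hinner : t ^ 2 ≤ t * ⟪a, x - y⟫ := by
    rw [← max_zero_mul_self_eq_sq, inner_sub_right]
    exact mul_le_mul_of_nonneg_left (by linarith) ht
  have hexpand : dist (x - t • a) y ^ 2 = dist x y ^ 2 - 2 * (t * ⟪a, x - y⟫) + t ^ 2 := by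
    rw [dist_eq_norm, dist_eq_norm, sub_right_comm, norm_sub_sq_real, real_inner_smul_right,
      real_inner_comm, norm_smul, ha, Real.norm_of_nonneg ht, mul_one]
  linarith

lemma sq_infDist_add_le_sq_infDist {α : Type*} [PseudoMetricSpace α] {s : Set α}
    (hs : s.Nonempty) {x x' : α} {r : ℝ} (h : ∀ y ∈ s, dist x' y ^ 2 + r ≤ dist x y ^ 2) :
    infDist x' s ^ 2 + r ≤ infDist x s ^ 2 := by
  have hsqrt : √(infDist x' s ^ 2 + r) ≤ infDist x s := by
    refine (le_infDist hs).2 fun y hy => (Real.sqrt_le_left dist_nonneg).2 ?_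
    have := pow_le_pow_left₀ infDist_nonneg (infDist_le_dist_of_mem (x := x') hy) 2
    linarith [h y hy]
  exact (Real.sqrt_le_left infDist_nonneg).1 hsqrt

theorem kaczmarz_inequality_step_progress_general
    {d : ℕ} (a : EuclideanSpace ℝ (Fin d)) (ha : ‖a‖ = 1) (c : ℝ)
    (S : Set (EuclideanSpace ℝ (Fin d)))
    (hSne : S.Nonempty)
    (hShalf : ∀ y ∈ S, ⟪a, y⟫ ≤ c)
    (x : EuclideanSpace ℝ (Fin d)) :
    Metric.infDist (x - max (⟪a, x⟫ - c) 0 • a) S ^ 2 ≤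
      Metric.infDist x S ^ 2 - (max (⟪a, x⟫ - c) 0) ^ 2 := by
  have := sq_infDist_add_le_sq_infDist hSne fun y hy =>
    dist_sub_smul_sq_add_sq_le ha (hShalf y hy) x
  linarith

/-- **Lemma (progress of the simple Kaczmarz step for an inequality).**
Let `a ∈ ℝ^d` with `‖a‖ = 1`, `c ∈ ℝ`, and let `S` be a nonempty closed convex set contained
in the half-space `{y : ⟪a, y⟫ ≤ c}`.  For any `x`, the randomized Kaczmarz update for the
inequality `⟪a, y⟫ ≤ c`, namely `x' = x − max(⟪a, x⟫ − c, 0) • a`, satisfies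
`d(x', S)² ≤ d(x, S)² − max(⟪a, x⟫ − c, 0)²`. -/
theorem kaczmarz_inequality_step_progress
    {d : ℕ} (a : EuclideanSpace ℝ (Fin d)) (ha : ‖a‖ = 1) (c : ℝ)
    (S : Set (EuclideanSpace ℝ (Fin d)))
    (hSne : S.Nonempty) (hSclosed : IsClosed S) (hSconv : Convex ℝ S)
    (hShalf : ∀ y ∈ S, ⟪a, y⟫ ≤ c)
    (x : EuclideanSpace ℝ (Fin d)) :
    Metric.infDist (x - max (⟪a, x⟫ - c) 0 • a) S ^ 2 ≤
      Metric.infDist x S ^ 2 - (max (⟪a, x⟫ - c) 0) ^ 2 :=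
  kaczmarz_inequality_step_progress_general a ha c S hSne hShalf x
end

section
/- Assume n_i ≥ 1. For x ∈ ℝ^d and each i ∈ I_≤, set x_i = x − max(⟨a_i, x⟩ − b_i, 0)·a_i. Then the average over the inequality rows satisfies (1/n_i)·Σ_{i∈I_≤} d(x_i, S)² ≤ d(x, S)² − (1/n_i)·Σ_{i∈I_≤} (max(⟨a_i, x⟩ − b_i, 0))². -/
/-!
Each `x_i` is the orthogonal projection of `x` onto the halfspace `{z | ⟪a i, z⟫ ≤ b i}`, which
contains `S`. For a unit normal, Pythagoras gives `d(x_i, z)² + max(⟪a i, x⟫ - b i, 0)² ≤ d(x, z)²`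
for every `z` in the halfspace; taking the infimum over `z ∈ S` turns this into the same inequality
for distances to `S`, and averaging over the inequality rows gives the claim.
-/

open scoped RealInnerProductSpace

open Finset Metric

theorem Fin.card_filter_le_val (m n : ℕ) : #{i : Fin (m + n) | m ≤ (i : ℕ)} = n := by
  have h := card_filter_add_card_filter_not (s := (univ : Finset (Fin (m + n))))
    (fun i : Fin (m + n) => (i : ℕ) < m)
  simp only [not_lt, Fin.card_filter_val_lt, card_univ, Fintype.card_fin] at h
  omega

theorem Finset.one_div_mul_sum_le_sub_of_le_sub {ι : Type*} {F : Finset ι} {n : ℕ}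
    {f g : ι → ℝ} {D : ℝ} (hF : #F ≤ n) (hD : 0 ≤ D) (h : ∀ i ∈ F, f i ≤ D - g i) :
    1 / n * ∑ i ∈ F, f i ≤ D - 1 / n * ∑ i ∈ F, g i := by
  have hFn : (#F : ℝ) / n ≤ 1 := div_le_one_of_le₀ (by exact_mod_cast hF) n.cast_nonneg
  calc 1 / n * ∑ i ∈ F, f i ≤ 1 / n * ∑ i ∈ F, (D - g i) := by gcongr with i hi; exact h i hi
    _ = (#F : ℝ) / n * D - 1 / n * ∑ i ∈ F, g i := by
      rw [sum_sub_distrib, sum_const, nsmul_eq_mul]; ring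
    _ ≤ D - 1 / n * ∑ i ∈ F, g i := by gcongr; exact mul_le_of_le_one_left hD hFn

theorem Metric.infDist_sq_add_le_infDist_sq {α : Type*} [PseudoMetricSpace α] {s : Set α}
    (hs : s.Nonempty) {x y : α} {c : ℝ} (h : ∀ z ∈ s, dist y z ^ 2 + c ≤ dist x z ^ 2) :
    infDist y s ^ 2 + c ≤ infDist x s ^ 2 := by
  suffices √(infDist y s ^ 2 + c) ≤ infDist x s from (Real.sqrt_le_iff.1 this).2
  refine (le_infDist hs).2 fun z hz => Real.sqrt_le_iff.2 ⟨dist_nonneg, ?_⟩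
  have : infDist y s ^ 2 ≤ dist y z ^ 2 := by
    gcongr
    · exact infDist_nonneg
    · exact infDist_le_dist_of_mem hz
  linarith [h z hz]

section InnerProductSpace

variable {E : Type*} [NormedAddCommGroup E] [InnerProductSpace ℝ E]

theorem dist_sub_smul_sq_of_norm_eq_one {a : E} (ha : ‖a‖ = 1) (x z : E) (l : ℝ) :
    dist (x - l • a) z ^ 2 = dist x z ^ 2 - 2 * l * ⟪a, x - z⟫ + l ^ 2 := by
  rw [dist_eq_norm, dist_eq_norm, sub_right_comm, norm_sub_sq_real, real_inner_smul_right,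
    norm_smul, real_inner_comm, ha, mul_one, Real.norm_eq_abs, sq_abs]
  ring

theorem dist_kaczmarzStep_sq_add_sq_le {a : E} (ha : ‖a‖ = 1) {b : ℝ} {z : E} (hz : ⟪a, z⟫ ≤ b)
    (x : E) :
    dist (x - max (⟪a, x⟫ - b) 0 • a) z ^ 2 + max (⟪a, x⟫ - b) 0 ^ 2 ≤ dist x z ^ 2 := by
  have hl : max (⟪a, x⟫ - b) 0 * (⟪a, x⟫ - b) = max (⟪a, x⟫ - b) 0 ^ 2 := by
    rcases max_cases (⟪a, x⟫ - b) 0 with ⟨h, -⟩ | ⟨h, -⟩ <;> rw [h] <;> ring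
  set l := max (⟪a, x⟫ - b) 0
  have hxz : ⟪a, x⟫ - b ≤ ⟪a, x - z⟫ := by rw [inner_sub_right]; linarith
  have : l * (⟪a, x⟫ - b) ≤ l * ⟪a, x - z⟫ := by gcongr
  rw [dist_sub_smul_sq_of_norm_eq_one ha]
  linarith

end InnerProductSpace

theorem kaczmarz_inequality_rows_average_progress_general
    {ne ni d : ℕ}
    (a : Fin (ne + ni) → EuclideanSpace ℝ (Fin d)) (b : Fin (ne + ni) → ℝ)
    (ha : ∀ i, ‖a i‖ = 1)
    (S : Set (EuclideanSpace ℝ (Fin d)))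
    (hSdef : S = {x | (∀ i : Fin (ne + ni), (i : ℕ) < ne → ⟪a i, x⟫ = b i) ∧
                      (∀ i : Fin (ne + ni), ne ≤ (i : ℕ) → ⟪a i, x⟫ ≤ b i)})
    (hSne : S.Nonempty)
    (x : EuclideanSpace ℝ (Fin d)) :
    (1 / ni) * ∑ i ∈ (Finset.univ.filter fun i : Fin (ne + ni) => ne ≤ (i : ℕ)),
        Metric.infDist (x - max (⟪a i, x⟫ - b i) 0 • a i) S ^ 2 ≤
      Metric.infDist x S ^ 2 -
        (1 / ni) * ∑ i ∈ (Finset.univ.filter fun i : Fin (ne + ni) => ne ≤ (i : ℕ)),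
          (max (⟪a i, x⟫ - b i) 0) ^ 2 := by
  refine one_div_mul_sum_le_sub_of_le_sub (Fin.card_filter_le_val ne ni).le (by positivity)
    fun i hi => ?_
  have hS : ∀ z ∈ S, ⟪a i, z⟫ ≤ b i := fun z hz => (hSdef ▸ hz).2 i (mem_filter.1 hi).2
  have := infDist_sq_add_le_infDist_sq hSne fun z hz =>
    dist_kaczmarzStep_sq_add_sq_le (ha i) (hS z hz) x
  linarith

/-- **Lemma (expected progress of the simple Kaczmarz step over the inequality rows).**
For a standardized system with nonempty feasible set `S` and `n_i ≥ 1` inequality rows, if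
for each inequality row `i ∈ I_≤` we set `x_i = x − max(⟪a i, x⟫ − b i, 0) • a i`, then
`(1/n_i) Σ_{i ∈ I_≤} d(x_i, S)² ≤ d(x, S)² − (1/n_i) Σ_{i ∈ I_≤} max(⟪a i, x⟫ − b i, 0)²`. -/
theorem kaczmarz_inequality_rows_average_progress
    {ne ni d : ℕ} (hni : 0 < ni)
    (a : Fin (ne + ni) → EuclideanSpace ℝ (Fin d)) (b : Fin (ne + ni) → ℝ)
    (ha : ∀ i, ‖a i‖ = 1)
    (S : Set (EuclideanSpace ℝ (Fin d)))
    (hSdef : S = {x | (∀ i : Fin (ne + ni), (i : ℕ) < ne → ⟪a i, x⟫ = b i) ∧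
                      (∀ i : Fin (ne + ni), ne ≤ (i : ℕ) → ⟪a i, x⟫ ≤ b i)})
    (hSne : S.Nonempty)
    (x : EuclideanSpace ℝ (Fin d)) :
    (1 / ni) * ∑ i ∈ (Finset.univ.filter fun i : Fin (ne + ni) => ne ≤ (i : ℕ)),
        Metric.infDist (x - max (⟪a i, x⟫ - b i) 0 • a i) S ^ 2 ≤
      Metric.infDist x S ^ 2 -
        (1 / ni) * ∑ i ∈ (Finset.univ.filter fun i : Fin (ne + ni) => ne ≤ (i : ℕ)),
          (max (⟪a i, x⟫ - b i) 0) ^ 2 :=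
  kaczmarz_inequality_rows_average_progress_general a b ha S hSdef hSne x
end

section
/- Let M be a real r × d matrix with λ_max(MM*) ≤ β' for some β' > 0, let c ∈ ℝ^r be in the range of M, let x ∈ ℝ^d, and let z be the orthogonal projection of x onto the nonempty affine subspace {y : My = c}. Suppose s ∈ ℝ^d satisfies ⟨x − z, s − z⟩ ≤ 0. Then ‖z − s‖² ≤ ‖x − s‖² − (1/β')·‖Mx − c‖². -/
open scoped RealInnerProductSpace BigOperators

noncomputable section

/-!
The eigenvalue bound says `M Mᴴ ≤ β'` in the Loewner order, i.e. `‖Mᴴ‖² ≤ β'` for the `ℓ²`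
operator norm; since `‖M‖ = ‖Mᴴ‖`, the residual satisfies `‖M x - c‖² = ‖M (x - z)‖² ≤ β' ‖x - z‖²`.
The obtuse-angle condition makes the triangle `x, z, s` obtuse at `z`, so
`‖z - s‖² + ‖x - z‖² ≤ ‖x - s‖²`, and the two inequalities combine.
-/

open scoped MatrixOrder ComplexOrder Matrix.Norms.L2Operator

namespace Matrix

variable {m n 𝕜 : Type*} [Fintype m] [Fintype n] [RCLike 𝕜]

theorem IsHermitian.le_algebraMap_of_eigenvalues_le [DecidableEq n] {A : Matrix n n 𝕜}
    (hA : A.IsHermitian) {β : ℝ} (h : ∀ i, hA.eigenvalues i ≤ β) :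
    A ≤ algebraMap ℝ (Matrix n n 𝕜) β := by
  refine le_algebraMap_of_spectrum_le ?_ hA.isSelfAdjoint
  rw [hA.spectrum_real_eq_range_eigenvalues]
  rintro _ ⟨i, rfl⟩
  exact h i

theorem norm_conjTranspose_mulVec_sq_le_of_mul_conjTranspose_le [DecidableEq m]
    {A : Matrix m n 𝕜} {β : ℝ} (h : A * Aᴴ ≤ algebraMap ℝ (Matrix m m 𝕜) β) (w : m → 𝕜) :
    ‖WithLp.toLp 2 (Aᴴ *ᵥ w)‖ ^ 2 ≤ β * ‖WithLp.toLp 2 w‖ ^ 2 := by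
  have hq := (le_iff.mp h).re_dotProduct_nonneg w
  rw [Algebra.algebraMap_eq_smul_one, sub_mulVec, smul_mulVec, one_mulVec, dotProduct_sub,
    dotProduct_smul, ← mulVec_mulVec, dotProduct_mulVec, show star w ᵥ* A = star (Aᴴ *ᵥ w) by
      rw [star_mulVec, conjTranspose_conjTranspose]] at hq
  simp only [← inner_self_eq_norm_sq (𝕜 := 𝕜), EuclideanSpace.inner_toLp_toLp]
  simpa only [map_sub, RCLike.smul_re, dotProduct_comm, sub_nonneg] using hq

theorem l2_opNorm_sq_le_of_mul_conjTranspose_le [DecidableEq m] [DecidableEq n]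
    {A : Matrix m n 𝕜} {β : ℝ} (hβ : 0 ≤ β) (h : A * Aᴴ ≤ algebraMap ℝ (Matrix m m 𝕜) β) :
    ‖A‖ ^ 2 ≤ β := by
  have hconj : ‖Aᴴ‖ ≤ √β := by
    refine ContinuousLinearMap.opNorm_le_bound _ (Real.sqrt_nonneg β) fun w ↦ ?_
    rw [← Real.sqrt_sq (norm_nonneg _), ← Real.sqrt_sq (norm_nonneg w), ← Real.sqrt_mul hβ]
    exact Real.sqrt_le_sqrt (norm_conjTranspose_mulVec_sq_le_of_mul_conjTranspose_le h w)
  calc ‖A‖ ^ 2 = ‖Aᴴ‖ ^ 2 := by rw [l2_opNorm_conjTranspose]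
    _ ≤ √β ^ 2 := by gcongr
    _ = β := Real.sq_sqrt hβ

theorem norm_mulVec_sq_le_of_mul_conjTranspose_le [DecidableEq m] [DecidableEq n]
    {A : Matrix m n 𝕜} {β : ℝ} (hβ : 0 ≤ β) (h : A * Aᴴ ≤ algebraMap ℝ (Matrix m m 𝕜) β)
    (x : EuclideanSpace 𝕜 n) :
    ‖WithLp.toLp 2 (A *ᵥ x)‖ ^ 2 ≤ β * ‖x‖ ^ 2 :=
  calc ‖WithLp.toLp 2 (A *ᵥ x)‖ ^ 2 ≤ (‖A‖ * ‖x‖) ^ 2 := by gcongr; exact l2_opNorm_mulVec A x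
    _ ≤ β * ‖x‖ ^ 2 := by
      rw [mul_pow]
      gcongr
      exact l2_opNorm_sq_le_of_mul_conjTranspose_le hβ h

end Matrix

theorem norm_sub_sq_add_norm_sub_sq_le_of_inner_nonpos {E : Type*} [NormedAddCommGroup E]
    [InnerProductSpace ℝ E] {x z s : E} (h : ⟪x - z, s - z⟫ ≤ 0) :
    ‖z - s‖ ^ 2 + ‖x - z‖ ^ 2 ≤ ‖x - s‖ ^ 2 := by
  have hexpand := norm_sub_sq_real (x - z) (s - z)
  rw [sub_sub_sub_cancel_right, norm_sub_rev s z] at hexpand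
  linarith

theorem obtuse_block_projection_progress_general
    {r d : ℕ} (M : Matrix (Fin r) (Fin d) ℝ) (β' : ℝ) (hβ' : 0 < β')
    -- λ_max(M M*) ≤ β'
    (hpav : ∀ i : Fin r, (Matrix.isHermitian_mul_conjTranspose_self M).eigenvalues i ≤ β')
    (c : Fin r → ℝ)
    (x z : EuclideanSpace ℝ (Fin d))
    -- z is the orthogonal projection of x onto {y : M y = c}:
    (hzmem : M.mulVec z = c)
    (s : EuclideanSpace ℝ (Fin d))
    -- the obtuse-angle condition
    (hobtuse : ⟪x - z, s - z⟫ ≤ 0) :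
    ‖z - s‖ ^ 2 ≤ ‖x - s‖ ^ 2 - (1 / β') * ∑ i, (M.mulVec x i - c i) ^ 2 := by
  have hMM := (Matrix.isHermitian_mul_conjTranspose_self M).le_algebraMap_of_eigenvalues_le hpav
  have hresidual : ∑ i, (M.mulVec x i - c i) ^ 2 ≤ β' * ‖x - z‖ ^ 2 := by
    have h := Matrix.norm_mulVec_sq_le_of_mul_conjTranspose_le hβ'.le hMM (x - z)
    simpa only [WithLp.ofLp_sub, Matrix.mulVec_sub, hzmem, EuclideanSpace.norm_sq_eq,
      Real.norm_eq_abs, sq_abs, Pi.sub_apply] using h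
  have hobtuse_triangle := norm_sub_sq_add_norm_sub_sq_le_of_inner_nonpos hobtuse
  have hscaled : (1 / β') * ∑ i, (M.mulVec x i - c i) ^ 2 ≤ ‖x - z‖ ^ 2 := by
    rw [one_div_mul_eq_div, div_le_iff₀ hβ', mul_comm]
    exact hresidual
  linarith

/-- **Lemma (progress of an obtuse block projection).**
Let `M` be a real `r × d` matrix with `λ_max(M M*) ≤ β'` for some `β' > 0` (all eigenvalues
of the Hermitian positive semidefinite matrix `M Mᴴ` are at most `β'`), let `c` be in the
range of `M`, and let `z` be the orthogonal projection (nearest point) of `x` onto the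
nonempty affine subspace `{y : M y = c}`.  If `s` satisfies the obtuse-angle condition
`⟪x − z, s − z⟫ ≤ 0`, then `‖z − s‖² ≤ ‖x − s‖² − (1/β') ‖M x − c‖²`. -/
theorem obtuse_block_projection_progress
    {r d : ℕ} (M : Matrix (Fin r) (Fin d) ℝ) (β' : ℝ) (hβ' : 0 < β')
    -- λ_max(M M*) ≤ β'
    (hpav : ∀ i : Fin r, (Matrix.isHermitian_mul_conjTranspose_self M).eigenvalues i ≤ β')
    (c : Fin r → ℝ)
    -- c is in the range of M, so {y : M y = c} is a nonempty affine subspace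
    (hc : ∃ y : EuclideanSpace ℝ (Fin d), M.mulVec y = c)
    (x z : EuclideanSpace ℝ (Fin d))
    -- z is the orthogonal projection of x onto {y : M y = c}:
    (hzmem : M.mulVec z = c)
    (hznear : ∀ y : EuclideanSpace ℝ (Fin d), M.mulVec y = c → ‖x - z‖ ≤ ‖x - y‖)
    (s : EuclideanSpace ℝ (Fin d))
    -- the obtuse-angle condition
    (hobtuse : ⟪x - z, s - z⟫ ≤ 0) :
    ‖z - s‖ ^ 2 ≤ ‖x - s‖ ^ 2 - (1 / β') * ∑ i, (M.mulVec x i - c i) ^ 2 :=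
  obtuse_block_projection_progress_general M β' hβ' hpav c x z hzmem s hobtuse
end
end
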